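/- arXiv:2205.02372 — 7 statements merged into one kernel-verified Lean document; each statement's English description precedes it below -/
import Mathlib

section
/- Let a be a prime number with a ≡ 1 (mod 4). Then there exists a prime number b with b ≡ 3 (mod 4) such that a is a quadratic non-residue modulo b, i.e., the Legendre symbol (a/b) = -1. -/
/-!
Take a non-residue `c` modulo `a`. Dirichlet's theorem, applied to the class of `(3, c)` in
`ZMod 4 × ZMod a ≃ ZMod (4 * a)`, gives a prime `b ≡ 3 (mod 4)` with `b ≡ c (mod a)`. Since
`a ≡ 1 (mod 4)`, quadratic reciprocity gives `(a/b) = (b/a) = (c/a) = -1`.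
-/

theorem Nat.exists_prime_natCast_eq_and_natCast_eq {m n : ℕ} [NeZero m] [NeZero n]
    (hmn : m.Coprime n) {u : ZMod m} {v : ZMod n} (hu : IsUnit u) (hv : IsUnit v) :
    ∃ p : ℕ, p.Prime ∧ (p : ZMod m) = u ∧ (p : ZMod n) = v := by
  let e := ZMod.chineseRemainder hmn
  have hunit : IsUnit (e.symm (u, v)) := (Prod.isUnit_iff.mpr ⟨hu, hv⟩).map e.symm
  obtain ⟨p, -, hp, hpuv⟩ := Nat.forall_exists_prime_gt_and_eq_mod hunit 0
  have hpair : (p : ZMod m × ZMod n) = (u, v) := by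
    rw [← map_natCast e, hpuv, e.apply_symm_apply]
  exact ⟨p, hp, Prod.ext_iff.mp hpair⟩

/-- Legendre's Lemma: for every prime `a ≡ 1 (mod 4)` there exists a prime
`b ≡ 3 (mod 4)` of which `a` is a quadratic non-residue, i.e. `(a/b) = -1`. -/
theorem legendre_lemma (a : ℕ) (ha : a.Prime) (ha4 : a % 4 = 1) :
    ∃ b : ℕ, ∃ hb : b.Prime, b % 4 = 3 ∧ @legendreSym b ⟨hb⟩ (a : ℤ) = -1 := by
  have : Fact a.Prime := ⟨ha⟩
  obtain ⟨c, hc⟩ :=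
    FiniteField.exists_nonsquare (F := ZMod a) (by rw [ZMod.ringChar_zmod_n]; omega)
  have hc0 : c ≠ 0 := by
    rintro rfl
    exact hc ⟨0, by simp⟩
  have h4a : Nat.Coprime 4 a :=
    Nat.Coprime.pow_left 2 ((Nat.coprime_primes Nat.prime_two ha).2 (by omega))
  obtain ⟨b, hb, hb3, hbc⟩ := Nat.exists_prime_natCast_eq_and_natCast_eq h4a
    (by decide : IsUnit (3 : ZMod 4)) hc0.isUnit
  have : Fact b.Prime := ⟨hb⟩
  have hb4 : b % 4 = 3 := by
    rw [← ZMod.val_natCast, hb3]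
    rfl
  refine ⟨b, hb, hb4, ?_⟩
  rw [legendreSym.quadratic_reciprocity_one_mod_four ha4 (by omega),
    legendreSym.eq_neg_one_iff' (p := a), hbc]
  exact hc
end

section
/- Let a, b, c be nonzero integers whose absolute values are distinct odd primes, and suppose a, b, c do not all have the same sign. If the equation a·x² + b·y² + c·z² = 0 has no solution in integers x, y, z not all zero, then at least one of the following holds: the Legendre symbol (-bc/|a|) = -1, or (-ca/|b|) = -1, or (-ab/|c|) = -1. -/
set_option maxHeartbeats 1000000

open Finset

private lemma exists_sqrt' (p : ℕ) (hp : p.Prime) {m : ℤ}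
    (h : @legendreSym p ⟨hp⟩ m ≠ -1) :
    ∃ t : ℤ, (p : ℤ) ∣ t ^ 2 - m := by
  haveI : Fact p.Prime := ⟨hp⟩
  have hsq : IsSquare ((m : ZMod p)) := by
    by_contra hns
    exact h ((legendreSym.eq_neg_one_iff p).mpr hns)
  obtain ⟨s, hs⟩ := hsq
  haveI : NeZero p := ⟨hp.pos.ne'⟩
  refine ⟨(s.val : ℤ), ?_⟩
  rw [← ZMod.intCast_zmod_eq_zero_iff_dvd]
  have hts : ((s.val : ℕ) : ZMod p) = s := by
    simp [ZMod.natCast_val, ZMod.cast_id]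
  push_cast
  rw [hts, hs]
  ring

private lemma sq_ne_pmul {q r : ℕ} (hq : q.Prime) (hr : r.Prime) (hne : q ≠ r)
    (X : ℤ) : X ^ 2 ≠ (q : ℤ) * r := by
  intro h
  have h' : X.natAbs ^ 2 = q * r := by
    have := congrArg Int.natAbs h
    simpa [Int.natAbs_mul, Int.natAbs_pow] using this
  have hdvd : q ∣ X.natAbs := hq.dvd_of_dvd_pow (h' ▸ Dvd.intro r rfl)
  obtain ⟨k, hk⟩ := hdvd
  have h2 : q * (q * k ^ 2) = q * r := by rw [← h', hk]; ring
  have h3 : q ∣ r := ⟨k ^ 2, (Nat.eq_of_mul_eq_mul_left hq.pos h2).symm⟩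
  exact hne ((Nat.prime_dvd_prime_iff_eq hq hr).mp h3)

private lemma key (p q r : ℕ) (hp : p.Prime) (hq : q.Prime) (hr : r.Prime)
    (hpq : p ≠ q) (hqr : q ≠ r) (hpr : p ≠ r)
    (h1 : @legendreSym p ⟨hp⟩ ((q : ℤ) * r) ≠ -1)
    (h2 : @legendreSym q ⟨hq⟩ ((r : ℤ) * p) ≠ -1)
    (h3 : @legendreSym r ⟨hr⟩ (-((p : ℤ) * q)) ≠ -1) :
    ∃ x y z : ℤ, ¬(x = 0 ∧ y = 0 ∧ z = 0) ∧
      (p : ℤ) * x ^ 2 + q * y ^ 2 - r * z ^ 2 = 0 := by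
  obtain ⟨ta, hta⟩ := exists_sqrt' p hp h1
  obtain ⟨tb, htb⟩ := exists_sqrt' q hq h2
  obtain ⟨tc, htc⟩ := exists_sqrt' r hr h3
  haveI : Fact p.Prime := ⟨hp⟩
  haveI : Fact q.Prime := ⟨hq⟩
  haveI : Fact r.Prime := ⟨hr⟩
  haveI : NeZero p := ⟨hp.pos.ne'⟩
  haveI : NeZero q := ⟨hq.pos.ne'⟩
  haveI : NeZero r := ⟨hr.pos.ne'⟩
  -- the box
  set sp := Nat.sqrt (q * r) with hsp
  set sq2 := Nat.sqrt (r * p) with hsq2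
  set sr := Nat.sqrt (p * q) with hsr
  set S : Finset (ℕ × ℕ × ℕ) :=
    (range (sp + 1)) ×ˢ (range (sq2 + 1)) ×ˢ (range (sr + 1)) with hS
  -- the linear map
  set f : ℕ × ℕ × ℕ → ZMod p × ZMod q × ZMod r := fun v =>
    ((((q : ℤ) * v.2.1 - ta * v.2.2 : ℤ) : ZMod p),
     (((p : ℤ) * v.1 - tb * v.2.2 : ℤ) : ZMod q),
     (((p : ℤ) * v.1 - tc * v.2.1 : ℤ) : ZMod r)) with hf
  have hcard : Fintype.card (ZMod p × ZMod q × ZMod r) < S.card := by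
    have hc1 : Fintype.card (ZMod p × ZMod q × ZMod r) = p * (q * r) := by
      simp [ZMod.card]
    have hcS : S.card = (sp + 1) * ((sq2 + 1) * (sr + 1)) := by
      simp [hS, Finset.card_product]
    rw [hc1, hcS]
    have b1 : q * r < (sp + 1) ^ 2 := Nat.lt_succ_sqrt' (q * r)
    have b2 : r * p < (sq2 + 1) ^ 2 := Nat.lt_succ_sqrt' (r * p)
    have b3 : p * q < (sr + 1) ^ 2 := Nat.lt_succ_sqrt' (p * q)
    have hsq : (p * (q * r)) ^ 2 < ((sp + 1) * ((sq2 + 1) * (sr + 1))) ^ 2 := by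
      have e : (p * (q * r)) ^ 2 = (q * r) * ((r * p) * (p * q)) := by ring
      have e2 : ((sp + 1) * ((sq2 + 1) * (sr + 1))) ^ 2 =
          ((sp + 1) ^ 2) * (((sq2 + 1) ^ 2) * ((sr + 1) ^ 2)) := by
        ring
      rw [e, e2]
      exact Nat.mul_lt_mul'' b1 (Nat.mul_lt_mul'' b2 b3)
    exact lt_of_pow_lt_pow_left₀ 2 (Nat.zero_le _) hsq
  obtain ⟨u, hu, v, hv, huv, hfeq⟩ :=
    Finset.exists_ne_map_eq_of_card_lt_of_maps_to hcard
      (fun x _ => Finset.mem_univ (f x))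
  -- bounds from the box
  simp only [hS, Finset.mem_product, Finset.mem_range, Nat.lt_succ_iff] at hu hv
  obtain ⟨hu1, hu2, hu3⟩ := hu
  obtain ⟨hv1, hv2, hv3⟩ := hv
  set X : ℤ := (u.1 : ℤ) - v.1 with hX
  set Y : ℤ := (u.2.1 : ℤ) - v.2.1 with hY
  set Z : ℤ := (u.2.2 : ℤ) - v.2.2 with hZ
  have hXb : X ^ 2 < (q : ℤ) * r := by
    have h1' : X ^ 2 ≤ (sp : ℤ) ^ 2 := by
      have l1 : (u.1 : ℤ) ≤ sp := Int.ofNat_le.mpr hu1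
      have l2 : (v.1 : ℤ) ≤ sp := Int.ofNat_le.mpr hv1
      have l3 : (0 : ℤ) ≤ u.1 := Int.natCast_nonneg _
      have l4 : (0 : ℤ) ≤ v.1 := Int.natCast_nonneg _
      nlinarith
    have h2' : ((sp : ℤ)) ^ 2 ≤ (q : ℤ) * r := by
      have hnat : Nat.sqrt (q * r) ^ 2 ≤ q * r := Nat.sqrt_le' (q * r)
      have hint : ((Nat.sqrt (q * r) ^ 2 : ℕ) : ℤ) ≤ ((q * r : ℕ) : ℤ) := Int.ofNat_le.mpr hnat
      push_cast at hint
      nlinarith [hint]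
    exact lt_of_le_of_ne (le_trans h1' h2') (sq_ne_pmul hq hr hqr X)
  have hYb : Y ^ 2 < (r : ℤ) * p := by
    have h1' : Y ^ 2 ≤ (sq2 : ℤ) ^ 2 := by
      have l1 : (u.2.1 : ℤ) ≤ sq2 := Int.ofNat_le.mpr hu2
      have l2 : (v.2.1 : ℤ) ≤ sq2 := Int.ofNat_le.mpr hv2
      have l3 : (0 : ℤ) ≤ u.2.1 := Int.natCast_nonneg _
      have l4 : (0 : ℤ) ≤ v.2.1 := Int.natCast_nonneg _
      nlinarith
    have h2' : ((sq2 : ℤ)) ^ 2 ≤ (r : ℤ) * p := by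
      have hnat : Nat.sqrt (r * p) ^ 2 ≤ r * p := Nat.sqrt_le' (r * p)
      have hint : ((Nat.sqrt (r * p) ^ 2 : ℕ) : ℤ) ≤ ((r * p : ℕ) : ℤ) := Int.ofNat_le.mpr hnat
      push_cast at hint
      nlinarith [hint]
    exact lt_of_le_of_ne (le_trans h1' h2') (sq_ne_pmul hr hp (Ne.symm hpr) Y)
  have hZb : Z ^ 2 < (p : ℤ) * q := by
    have h1' : Z ^ 2 ≤ (sr : ℤ) ^ 2 := by
      have l1 : (u.2.2 : ℤ) ≤ sr := Int.ofNat_le.mpr hu3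
      have l2 : (v.2.2 : ℤ) ≤ sr := Int.ofNat_le.mpr hv3
      have l3 : (0 : ℤ) ≤ u.2.2 := Int.natCast_nonneg _
      have l4 : (0 : ℤ) ≤ v.2.2 := Int.natCast_nonneg _
      nlinarith
    have h2' : ((sr : ℤ)) ^ 2 ≤ (p : ℤ) * q := by
      have hnat : Nat.sqrt (p * q) ^ 2 ≤ p * q := Nat.sqrt_le' (p * q)
      have hint : ((Nat.sqrt (p * q) ^ 2 : ℕ) : ℤ) ≤ ((p * q : ℕ) : ℤ) := Int.ofNat_le.mpr hnat
      push_cast at hint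
      nlinarith [hint]
    exact lt_of_le_of_ne (le_trans h1' h2') (sq_ne_pmul hp hq hpq Z)
  -- nontriviality
  have hnt : ¬(X = 0 ∧ Y = 0 ∧ Z = 0) := by
    rintro ⟨e1, e2, e3⟩
    apply huv
    have g1 : u.1 = v.1 := Int.ofNat_inj.mp (by linarith [sub_eq_zero.mp e1])
    have g2 : u.2.1 = v.2.1 := Int.ofNat_inj.mp (by linarith [sub_eq_zero.mp e2])
    have g3 : u.2.2 = v.2.2 := Int.ofNat_inj.mp (by linarith [sub_eq_zero.mp e3])
    exact Prod.ext g1 (Prod.ext g2 g3)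
  -- congruences
  have hfe := hfeq
  rw [hf] at hfe
  simp only [Prod.mk.injEq] at hfe
  obtain ⟨he1, he2, he3⟩ := hfe
  have hdp : (p : ℤ) ∣ (q : ℤ) * Y - ta * Z := by
    have := (ZMod.intCast_eq_intCast_iff' _ _ _).mp he1
    have hd := Int.ModEq.dvd this
    have e : ((q : ℤ) * v.2.1 - ta * v.2.2) - ((q : ℤ) * u.2.1 - ta * u.2.2)
        = -((q : ℤ) * Y - ta * Z) := by rw [hY, hZ]; ring
    rw [e] at hd
    exact (dvd_neg.mp hd)
  have hdq : (q : ℤ) ∣ (p : ℤ) * X - tb * Z := by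
    have := (ZMod.intCast_eq_intCast_iff' _ _ _).mp he2
    have hd := Int.ModEq.dvd this
    have e : ((p : ℤ) * v.1 - tb * v.2.2) - ((p : ℤ) * u.1 - tb * u.2.2)
        = -((p : ℤ) * X - tb * Z) := by rw [hX, hZ]; ring
    rw [e] at hd
    exact (dvd_neg.mp hd)
  have hdr : (r : ℤ) ∣ (p : ℤ) * X - tc * Y := by
    have := (ZMod.intCast_eq_intCast_iff' _ _ _).mp he3
    have hd := Int.ModEq.dvd this
    have e : ((p : ℤ) * v.1 - tc * v.2.1) - ((p : ℤ) * u.1 - tc * u.2.1)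
        = -((p : ℤ) * X - tc * Y) := by rw [hX, hY]; ring
    rw [e] at hd
    exact (dvd_neg.mp hd)
  set F : ℤ := (p : ℤ) * X ^ 2 + q * Y ^ 2 - r * Z ^ 2 with hF
  have hpP : Prime (p : ℤ) := Nat.prime_iff_prime_int.mp hp
  have hqP : Prime (q : ℤ) := Nat.prime_iff_prime_int.mp hq
  have hrP : Prime (r : ℤ) := Nat.prime_iff_prime_int.mp hr
  have hFp : (p : ℤ) ∣ F := by
    have hmul : (p : ℤ) ∣ (q : ℤ) * F := by
      have e : (q : ℤ) * F = (p : ℤ) * ((q : ℤ) * X ^ 2)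
          + ((q : ℤ) * Y - ta * Z) * ((q : ℤ) * Y + ta * Z)
          + (ta ^ 2 - (q : ℤ) * r) * Z ^ 2 := by rw [hF]; ring
      rw [e]
      exact dvd_add (dvd_add (Dvd.intro _ rfl) (hdp.mul_right _)) (hta.mul_right _)
    rcases hpP.dvd_mul.mp hmul with h | h
    · exfalso
      exact hpq ((Nat.prime_dvd_prime_iff_eq hp hq).mp (Int.ofNat_dvd.mp h))
    · exact h
  have hFq : (q : ℤ) ∣ F := by
    have hmul : (q : ℤ) ∣ (p : ℤ) * F := by
      have e : (p : ℤ) * F = (q : ℤ) * ((p : ℤ) * Y ^ 2)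
          + ((p : ℤ) * X - tb * Z) * ((p : ℤ) * X + tb * Z)
          + (tb ^ 2 - (r : ℤ) * p) * Z ^ 2 := by rw [hF]; ring
      rw [e]
      exact dvd_add (dvd_add (Dvd.intro _ rfl) (hdq.mul_right _)) (htb.mul_right _)
    rcases hqP.dvd_mul.mp hmul with h | h
    · exfalso
      exact hpq (((Nat.prime_dvd_prime_iff_eq hq hp).mp (Int.ofNat_dvd.mp h)).symm)
    · exact h
  have hFr : (r : ℤ) ∣ F := by
    have hmul : (r : ℤ) ∣ (p : ℤ) * F := by
      have e : (p : ℤ) * F = (r : ℤ) * (-(p : ℤ) * Z ^ 2)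
          + ((p : ℤ) * X - tc * Y) * ((p : ℤ) * X + tc * Y)
          + (tc ^ 2 - (-((p : ℤ) * q))) * Y ^ 2 := by rw [hF]; ring
      rw [e]
      exact dvd_add (dvd_add (Dvd.intro _ rfl) (hdr.mul_right _)) (htc.mul_right _)
    rcases hrP.dvd_mul.mp hmul with h | h
    · exfalso
      exact hpr (((Nat.prime_dvd_prime_iff_eq hr hp).mp (Int.ofNat_dvd.mp h)).symm)
    · exact h
  have cpq : IsCoprime (p : ℤ) (q : ℤ) :=
    Nat.isCoprime_iff_coprime.mpr ((Nat.coprime_primes hp hq).mpr hpq)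
  have cpr : IsCoprime (p : ℤ) (r : ℤ) :=
    Nat.isCoprime_iff_coprime.mpr ((Nat.coprime_primes hp hr).mpr hpr)
  have cqr : IsCoprime (q : ℤ) (r : ℤ) :=
    Nat.isCoprime_iff_coprime.mpr ((Nat.coprime_primes hq hr).mpr hqr)
  have hall : (p : ℤ) * q * r ∣ F :=
    (IsCoprime.mul_left cpr cqr).mul_dvd (cpq.mul_dvd hFp hFq) hFr
  obtain ⟨k, hk⟩ := hall
  have hppos : (0 : ℤ) < p := Int.natCast_pos.mpr hp.pos
  have hqpos : (0 : ℤ) < q := Int.natCast_pos.mpr hq.pos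
  have hrpos : (0 : ℤ) < r := Int.natCast_pos.mpr hr.pos
  have hPQR : (0 : ℤ) < (p : ℤ) * q * r := by positivity
  have hXn : (0 : ℤ) ≤ X ^ 2 := sq_nonneg X
  have hYn : (0 : ℤ) ≤ Y ^ 2 := sq_nonneg Y
  have hZn : (0 : ℤ) ≤ Z ^ 2 := sq_nonneg Z
  have hklow : -1 < k := by nlinarith
  have hkhigh : k < 2 := by nlinarith
  have hk01 : k = 0 ∨ k = 1 := by omega
  rcases hk01 with rfl | rfl
  · exact ⟨X, Y, Z, hnt, by rw [← hF, hk]; ring⟩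
  · refine ⟨X * Z + q * Y, Y * Z - p * X, Z ^ 2 + p * q, ?_, ?_⟩
    · rintro ⟨-, -, e3⟩
      nlinarith [sq_nonneg Z]
    · have hFe : (p : ℤ) * X ^ 2 + q * Y ^ 2 - r * Z ^ 2 = (p : ℤ) * q * r := by
        rw [← hF, hk]; ring
      linear_combination (Z ^ 2 + (p : ℤ) * q) * hFe

/-- Corollary of Legendre's theorem: if `|a|, |b|, |c|` are distinct odd primes,
`a, b, c` do not all have the same sign, and `a·x² + b·y² + c·z² = 0` has no
nontrivial integer solution, then one of the Legendre symbols
`(-bc/|a|)`, `(-ca/|b|)`, `(-ab/|c|)` equals `-1`. -/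
theorem legendre_ternary_cor (a b c : ℤ)
    (hpa : a.natAbs.Prime) (hpb : b.natAbs.Prime) (hpc : c.natAbs.Prime)
    (hoa : Odd a.natAbs) (hob : Odd b.natAbs) (hoc : Odd c.natAbs)
    (hab : a.natAbs ≠ b.natAbs) (hbc : b.natAbs ≠ c.natAbs) (hac : a.natAbs ≠ c.natAbs)
    (hsign : ¬((0 < a ∧ 0 < b ∧ 0 < c) ∨ (a < 0 ∧ b < 0 ∧ c < 0)))
    (hnosol : ¬ ∃ x y z : ℤ, ¬(x = 0 ∧ y = 0 ∧ z = 0) ∧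
      a * x ^ 2 + b * y ^ 2 + c * z ^ 2 = 0) :
    @legendreSym a.natAbs ⟨hpa⟩ (-(b * c)) = -1 ∨
    @legendreSym b.natAbs ⟨hpb⟩ (-(c * a)) = -1 ∨
    @legendreSym c.natAbs ⟨hpc⟩ (-(a * b)) = -1 := by
  by_contra hcon
  push_neg at hcon
  obtain ⟨h1, h2, h3⟩ := hcon
  apply hnosol
  have ha0 : a ≠ 0 := by
    rintro rfl
    exact Nat.not_prime_zero hpa
  have hb0 : b ≠ 0 := by
    rintro rfl
    exact Nat.not_prime_zero hpb
  have hc0 : c ≠ 0 := by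
    rintro rfl
    exact Nat.not_prime_zero hpc
  rcases lt_or_gt_of_ne ha0 with ha | ha <;>
    rcases lt_or_gt_of_ne hb0 with hb | hb <;>
      rcases lt_or_gt_of_ne hc0 with hc | hc
  · exact absurd (Or.inr ⟨ha, hb, hc⟩) hsign
  · -- (-,-,+) : key P Q R
    have ea : a = -((a.natAbs : ℤ)) := by
      have := Int.ofNat_natAbs_of_nonpos ha.le; linarith
    have eb : b = -((b.natAbs : ℤ)) := by
      have := Int.ofNat_natAbs_of_nonpos hb.le; linarith
    have ec : c = ((c.natAbs : ℤ)) := (Int.natAbs_of_nonneg hc.le).symm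
    have e1 : (-(b * c)) = ((b.natAbs : ℤ) * c.natAbs) := by
      conv_lhs => rw [eb, ec]
      try ring
    rw [e1] at h1
    have e2 : (-(c * a)) = ((c.natAbs : ℤ) * a.natAbs) := by
      conv_lhs => rw [ec, ea]
      try ring
    rw [e2] at h2
    have e3 : (-(a * b)) = (-((a.natAbs : ℤ) * b.natAbs)) := by
      conv_lhs => rw [ea, eb]
      try ring
    rw [e3] at h3
    obtain ⟨x, y, z, hnt, heq⟩ :=
      key a.natAbs b.natAbs c.natAbs hpa hpb hpc hab hbc hac h1 h2 h3
    exact ⟨x, y, z, hnt, by rw [ea, eb, ec]; linarith [heq]⟩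
  · -- (-,+,-) : key P R Q, tuple (x, z, y)
    have ea : a = -((a.natAbs : ℤ)) := by
      have := Int.ofNat_natAbs_of_nonpos ha.le; linarith
    have eb : b = ((b.natAbs : ℤ)) := (Int.natAbs_of_nonneg hb.le).symm
    have ec : c = -((c.natAbs : ℤ)) := by
      have := Int.ofNat_natAbs_of_nonpos hc.le; linarith
    have e4 : (-(b * c)) = ((c.natAbs : ℤ) * b.natAbs) := by
      conv_lhs => rw [eb, ec]
      try ring
    rw [e4] at h1
    have e5 : (-(a * b)) = ((b.natAbs : ℤ) * a.natAbs) := by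
      conv_lhs => rw [ea, eb]
      try ring
    rw [e5] at h3
    have e6 : (-(c * a)) = (-((a.natAbs : ℤ) * c.natAbs)) := by
      conv_lhs => rw [ea, ec]
      try ring
    rw [e6] at h2
    obtain ⟨x, y, z, hnt, heq⟩ :=
      key a.natAbs c.natAbs b.natAbs hpa hpc hpb hac hbc.symm hab h1 h3 h2
    exact ⟨x, z, y, by tauto, by rw [ea, eb, ec]; linarith [heq]⟩
  · -- (-,+,+) : key Q R P, tuple (z, x, y)
    have ea : a = -((a.natAbs : ℤ)) := by
      have := Int.ofNat_natAbs_of_nonpos ha.le; linarith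
    have eb : b = ((b.natAbs : ℤ)) := (Int.natAbs_of_nonneg hb.le).symm
    have ec : c = ((c.natAbs : ℤ)) := (Int.natAbs_of_nonneg hc.le).symm
    have e7 : (-(c * a)) = ((c.natAbs : ℤ) * a.natAbs) := by
      conv_lhs => rw [ec, ea]
      try ring
    rw [e7] at h2
    have e8 : (-(a * b)) = ((a.natAbs : ℤ) * b.natAbs) := by
      conv_lhs => rw [ea, eb]
      try ring
    rw [e8] at h3
    have e9 : (-(b * c)) = (-((b.natAbs : ℤ) * c.natAbs)) := by
      conv_lhs => rw [eb, ec]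
      try ring
    rw [e9] at h1
    obtain ⟨x, y, z, hnt, heq⟩ :=
      key b.natAbs c.natAbs a.natAbs hpb hpc hpa hbc hac.symm hab.symm h2 h3 h1
    exact ⟨z, x, y, by tauto, by rw [ea, eb, ec]; linarith [heq]⟩
  · -- (+,-,-) : key Q R P, tuple (z, x, y)
    have ea : a = ((a.natAbs : ℤ)) := (Int.natAbs_of_nonneg ha.le).symm
    have eb : b = -((b.natAbs : ℤ)) := by
      have := Int.ofNat_natAbs_of_nonpos hb.le; linarith
    have ec : c = -((c.natAbs : ℤ)) := by
      have := Int.ofNat_natAbs_of_nonpos hc.le; linarith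
    have e10 : (-(c * a)) = ((c.natAbs : ℤ) * a.natAbs) := by
      conv_lhs => rw [ec, ea]
      try ring
    rw [e10] at h2
    have e11 : (-(a * b)) = ((a.natAbs : ℤ) * b.natAbs) := by
      conv_lhs => rw [ea, eb]
      try ring
    rw [e11] at h3
    have e12 : (-(b * c)) = (-((b.natAbs : ℤ) * c.natAbs)) := by
      conv_lhs => rw [eb, ec]
      try ring
    rw [e12] at h1
    obtain ⟨x, y, z, hnt, heq⟩ :=
      key b.natAbs c.natAbs a.natAbs hpb hpc hpa hbc hac.symm hab.symm h2 h3 h1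
    exact ⟨z, x, y, by tauto, by rw [ea, eb, ec]; linarith [heq]⟩
  · -- (+,-,+) : key P R Q, tuple (x, z, y)
    have ea : a = ((a.natAbs : ℤ)) := (Int.natAbs_of_nonneg ha.le).symm
    have eb : b = -((b.natAbs : ℤ)) := by
      have := Int.ofNat_natAbs_of_nonpos hb.le; linarith
    have ec : c = ((c.natAbs : ℤ)) := (Int.natAbs_of_nonneg hc.le).symm
    have e13 : (-(b * c)) = ((c.natAbs : ℤ) * b.natAbs) := by
      conv_lhs => rw [eb, ec]
      try ring
    rw [e13] at h1
    have e14 : (-(a * b)) = ((b.natAbs : ℤ) * a.natAbs) := by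
      conv_lhs => rw [ea, eb]
      try ring
    rw [e14] at h3
    have e15 : (-(c * a)) = (-((a.natAbs : ℤ) * c.natAbs)) := by
      conv_lhs => rw [ea, ec]
      try ring
    rw [e15] at h2
    obtain ⟨x, y, z, hnt, heq⟩ :=
      key a.natAbs c.natAbs b.natAbs hpa hpc hpb hac hbc.symm hab h1 h3 h2
    exact ⟨x, z, y, by tauto, by rw [ea, eb, ec]; linarith [heq]⟩
  · -- (+,+,-) : key P Q R
    have ea : a = ((a.natAbs : ℤ)) := (Int.natAbs_of_nonneg ha.le).symm
    have eb : b = ((b.natAbs : ℤ)) := (Int.natAbs_of_nonneg hb.le).symm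
    have ec : c = -((c.natAbs : ℤ)) := by
      have := Int.ofNat_natAbs_of_nonpos hc.le; linarith
    have e16 : (-(b * c)) = ((b.natAbs : ℤ) * c.natAbs) := by
      conv_lhs => rw [eb, ec]
      try ring
    rw [e16] at h1
    have e17 : (-(c * a)) = ((c.natAbs : ℤ) * a.natAbs) := by
      conv_lhs => rw [ec, ea]
      try ring
    rw [e17] at h2
    have e18 : (-(a * b)) = (-((a.natAbs : ℤ) * b.natAbs)) := by
      conv_lhs => rw [ea, eb]
      try ring
    rw [e18] at h3
    obtain ⟨x, y, z, hnt, heq⟩ :=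
      key a.natAbs b.natAbs c.natAbs hpa hpb hpc hab hbc hac h1 h2 h3
    exact ⟨x, y, z, hnt, by rw [ea, eb, ec]; linarith [heq]⟩
  · exact absurd (Or.inl ⟨ha, hb, hc⟩) hsign
end

section
/- Let b and B be distinct primes, both congruent to 3 modulo 4. Then there exist positive integers M and N such that b·M² − B·N² = 1 or B·M² − b·N² = 1. -/
/-!
A solution of `X² - bB·Y² = 1` with `Y > 0` exists because `bB` is not a square. Since
`bB ≡ 1 (mod 4)`, `X = 2s + 1` and `Y = 2z` with `s(s + 1) = bB·z²`. The coprime factors `s` and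
`s + 1` share out the primes `b`, `B`, and what remains of each is a square. If `bB ∣ s`, this
gives a solution with a smaller `Y`, so we descend; if `bB ∣ s + 1`, then `s = u²` and
`b ∣ u² + 1`, impossible for `b ≡ 3 (mod 4)`; the two mixed cases are the claim.
-/

theorem Nat.exists_sq_of_coprime_of_mul_eq_sq {a b c : ℕ} (h : a.Coprime b)
    (heq : a * b = c ^ 2) : ∃ u, a = u ^ 2 :=
  exists_eq_pow_of_mul_eq_pow (by simpa [Nat.isUnit_iff, gcd_eq_nat_gcd] using h) heq

theorem Nat.exists_sq_sq_of_mul_succ_eq {a c s p q z : ℕ} (ha : 0 < a) (hp : s = a * p)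
    (hq : s + 1 = c * q) (h : s * (s + 1) = a * c * z ^ 2) :
    ∃ u v, p = u ^ 2 ∧ q = v ^ 2 ∧ z = u * v := by
  have hc : 0 < c := Nat.pos_of_ne_zero (by rintro rfl; simp at hq)
  have hpq : p * q = z ^ 2 := by
    apply Nat.eq_of_mul_eq_mul_left (Nat.mul_pos ha hc)
    rw [← h, hq, hp]; ring
  have hcop : p.Coprime q := by
    have : (a * p).Coprime (c * q) :=
      hp ▸ hq ▸ Nat.coprime_self_add_right.2 (Nat.coprime_one_right s)
    exact this.coprime_mul_left.coprime_mul_left_right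
  obtain ⟨u, rfl⟩ := Nat.exists_sq_of_coprime_of_mul_eq_sq hcop hpq
  obtain ⟨v, rfl⟩ := Nat.exists_sq_of_coprime_of_mul_eq_sq hcop.symm (by rw [mul_comm, hpq])
  refine ⟨u, v, rfl, rfl, Nat.pow_left_injective two_ne_zero ?_⟩
  simp only [← hpq, mul_pow]

theorem exists_mul_succ_eq_of_sq_eq_mul_sq_add_one {d X Y : ℕ} (hd : d % 4 = 1)
    (h : X ^ 2 = d * Y ^ 2 + 1) : ∃ s z, Y = 2 * z ∧ s * (s + 1) = d * z ^ 2 := by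
  obtain ⟨k, rfl⟩ : ∃ k, d = 4 * k + 1 := ⟨d / 4, by omega⟩
  obtain ⟨s, rfl | rfl⟩ := Nat.even_or_odd' X <;>
    obtain ⟨z, rfl | rfl⟩ := Nat.even_or_odd' Y
  · ring_nf at h; omega
  · ring_nf at h; omega
  · refine ⟨s, z, rfl, ?_⟩
    ring_nf at h ⊢; omega
  · ring_nf at h; omega

theorem Nat.Prime.mod_four_ne_three_of_dvd_sq_add_one {p u : ℕ} (hp : p.Prime)
    (h : p ∣ u ^ 2 + 1) : p % 4 ≠ 3 := by
  have := Fact.mk hp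
  refine ZMod.mod_four_ne_three_of_sq_eq_neg_one (y := u) ?_
  rw [← ZMod.natCast_eq_zero_iff] at h
  push_cast at h
  linear_combination h

theorem not_isSquare_mul_of_prime_of_coprime {p q : ℕ} (hp : p.Prime) (hq : q.Prime)
    (hpq : p.Coprime q) : ¬ IsSquare ((p * q : ℕ) : ℤ) := by
  rw [Int.isSquare_natCast_iff]
  rintro ⟨k, hk⟩
  have hsf : Squarefree (p * q) :=
    (Nat.squarefree_mul hpq).2 ⟨hp.squarefree, hq.squarefree⟩
  have hk1 : k = 1 := Nat.isUnit_iff.1 (hsf k (hk ▸ dvd_rfl))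
  rw [hk1, one_mul, mul_eq_one] at hk
  exact hp.ne_one hk.1

theorem exists_mul_sq_eq_mul_sq_add_one_of_sq_eq_mul_sq_add_one {b B : ℕ} (hb : b.Prime)
    (hB : B.Prime) (hbB : b.Coprime B) (hb4 : b % 4 = 3) (hd4 : b * B % 4 = 1) {X Y : ℕ}
    (hY : 0 < Y) (h : X ^ 2 = b * B * Y ^ 2 + 1) :
    ∃ M N, 0 < M ∧ 0 < N ∧ (b * M ^ 2 = B * N ^ 2 + 1 ∨ B * M ^ 2 = b * N ^ 2 + 1) := by
  induction Y using Nat.strong_induction_on generalizing X with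
  | _ Y ih =>
  obtain ⟨s, z, rfl, hs⟩ := exists_mul_succ_eq_of_sq_eq_mul_sq_add_one hd4 h
  have hdvd {p : ℕ} (hp : p ∣ b * B) : p ∣ s * (s + 1) := hs ▸ dvd_mul_of_dvd_left hp _
  rcases hb.dvd_mul.1 (hdvd (dvd_mul_right b B)) with hbs | hbs <;>
    rcases hB.dvd_mul.1 (hdvd (dvd_mul_left B b)) with hBs | hBs
  · obtain ⟨p, hp⟩ := hbB.mul_dvd_of_dvd_of_dvd hbs hBs
    obtain ⟨u, v, rfl, hv, rfl⟩ :=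
      Nat.exists_sq_sq_of_mul_succ_eq (c := 1) (Nat.mul_pos hb.pos hB.pos) hp (one_mul _).symm
        (by rw [hs, mul_one])
    obtain ⟨hu, hv0⟩ := CanonicallyOrderedAdd.mul_pos.1 (by omega : 0 < u * v)
    exact ih u (by nlinarith) hu (X := v) (by linarith)
  · obtain ⟨p, hp⟩ := hbs
    obtain ⟨q, hq⟩ := hBs
    obtain ⟨u, v, rfl, rfl, rfl⟩ := Nat.exists_sq_sq_of_mul_succ_eq hb.pos hp hq hs
    obtain ⟨hu, hv⟩ := CanonicallyOrderedAdd.mul_pos.1 (by omega : 0 < u * v)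
    exact ⟨v, u, hv, hu, Or.inr (by linarith)⟩
  · obtain ⟨p, hp⟩ := hBs
    obtain ⟨q, hq⟩ := hbs
    obtain ⟨u, v, rfl, rfl, rfl⟩ :=
      Nat.exists_sq_sq_of_mul_succ_eq hB.pos hp hq (by rw [hs, mul_comm B])
    obtain ⟨hu, hv⟩ := CanonicallyOrderedAdd.mul_pos.1 (by omega : 0 < u * v)
    exact ⟨v, u, hv, hu, Or.inl (by linarith)⟩
  · obtain ⟨q, hq⟩ := hbB.mul_dvd_of_dvd_of_dvd hbs hBs
    obtain ⟨u, v, rfl, rfl, -⟩ :=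
      Nat.exists_sq_sq_of_mul_succ_eq (a := 1) one_pos (one_mul s).symm hq (by rw [hs, one_mul])
    refine absurd hb4 (hb.mod_four_ne_three_of_dvd_sq_add_one (u := u) ?_)
    exact hq ▸ (dvd_mul_right b B).mul_right _

/-- Pell-equation consequence: for distinct primes `b, B ≡ 3 (mod 4)` there exist
positive integers `M, N` with `b·M² − B·N² = 1` or `B·M² − b·N² = 1`. -/
theorem pell_consequence (b B : ℕ) (hb : b.Prime) (hB : B.Prime) (hne : b ≠ B)
    (hb4 : b % 4 = 3) (hB4 : B % 4 = 3) :
    ∃ M N : ℕ, 0 < M ∧ 0 < N ∧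
      ((b : ℤ) * M ^ 2 - B * N ^ 2 = 1 ∨ (B : ℤ) * M ^ 2 - b * N ^ 2 = 1) := by
  have hbB : b.Coprime B := (Nat.coprime_primes hb hB).2 hne
  obtain ⟨x, y, hxy, hy⟩ := Pell.exists_of_not_isSquare
    (Nat.cast_pos.2 (Nat.mul_pos hb.pos hB.pos))
    (not_isSquare_mul_of_prime_of_coprime hb hB hbB)
  obtain ⟨M, N, hM, hN, h⟩ :=
    exists_mul_sq_eq_mul_sq_add_one_of_sq_eq_mul_sq_add_one hb hB hbB hb4
    (by rw [Nat.mul_mod, hb4, hB4]) (X := x.natAbs) (Int.natAbs_pos.2 hy)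
    (by push_cast at hxy; zify; simp only [sq_abs]; linarith)
  refine ⟨M, N, hM, hN, h.imp (fun h ↦ ?_) (fun h ↦ ?_)⟩ <;> zify at h <;> linarith
end

section
/- Let a be a prime with a ≡ 1 (mod 8). Then the set of primes β with β ≡ 3 (mod 4) and Legendre symbol (a/β) = -1 is infinite, and moreover it contains at least one prime β with β < a. -/
/-!
Dirichlet's theorem applied to the residue class `p ≡ 3 (mod 4)`, `p ≡ b (mod a)` with `b` a
non-residue modulo `a` gives infinitely many such primes, by quadratic reciprocity.

For a small one, note that for a prime `q ≡ 3 (mod 4)` not dividing `a`, `(a/q) = -1` says exactly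
that `-a` is a square modulo `q`. If `q > a`, choose an even `w < q` with `q ∣ w² + a`; then
`w² + a = q M` with `M < q` (as `w, a < q`) and `M ≡ 3 (mod 4)`, so `M` has a prime factor
`r ≡ 3 (mod 4)`, and `-a ≡ w² (mod r)`. Descending from `q` to `r` must stop below `a`.
-/

theorem Nat.exists_prime_dvd_of_mod_four_eq_three {n : ℕ} (hn : n % 4 = 3) :
    ∃ p, p.Prime ∧ p ∣ n ∧ p % 4 = 3 := by
  induction n using Nat.strong_induction_on with
  | _ n ih =>
    obtain ⟨p, hp, m, rfl⟩ := Nat.exists_prime_and_dvd (show n ≠ 1 by omega)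
    by_cases hp4 : p % 4 = 3
    · exact ⟨p, hp, dvd_mul_right p m, hp4⟩
    have hmod : p % 4 * (m % 4) % 4 = 3 := by rw [← Nat.mul_mod]; exact hn
    have hm4 : m % 4 = 3 := by
      obtain h | h | h : p % 4 = 0 ∨ p % 4 = 1 ∨ p % 4 = 2 := by omega
      all_goals rw [h] at hmod; omega
    obtain ⟨q, hq, hqm, hq4⟩ := ih m (lt_mul_left (by omega) hp.one_lt) hm4
    exact ⟨q, hq, dvd_mul_of_dvd_right hqm p, hq4⟩

theorem legendreSym_eq_neg_one_iff_isSquare_neg {p : ℕ} [Fact p.Prime] (hp : p % 4 = 3)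
    {a : ℤ} (ha : (a : ZMod p) ≠ 0) : legendreSym p a = -1 ↔ IsSquare (-(a : ZMod p)) := by
  have hneg : legendreSym p (-a) = -legendreSym p a := by
    rw [legendreSym.at_neg (by omega), ZMod.χ₄_nat_three_mod_four hp, neg_one_mul]
  rw [← Int.cast_neg, ← legendreSym.eq_one_iff p (by simpa using ha), hneg, neg_eq_iff_eq_neg]

/-- Replacing `w` by `q - w` flips the parity of a square root of `x`, as `q` is odd. -/
theorem ZMod.exists_even_sq_eq_of_isSquare {q : ℕ} (hq : Odd q) {x : ZMod q} (hx : IsSquare x) :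
    ∃ w : ℕ, Even w ∧ w < q ∧ (w : ZMod q) ^ 2 = x := by
  have : NeZero q := ⟨hq.pos.ne'⟩
  obtain ⟨y, rfl⟩ := hx
  rcases Nat.even_or_odd y.val with hy | hy
  · exact ⟨y.val, hy, y.val_lt, by rw [ZMod.natCast_zmod_val, sq]⟩
  · refine ⟨q - y.val, Nat.Odd.sub_odd hq hy, by have := hy.pos; have := y.val_lt; omega, ?_⟩
    rw [Nat.cast_sub y.val_lt.le, ZMod.natCast_self, ZMod.natCast_zmod_val]
    ring

theorem exists_prime_lt_isSquare_neg_of_lt {a q : ℕ} (ha : a % 4 = 1) (hq : q.Prime)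
    (hq4 : q % 4 = 3) (haq : a < q) (hsq : IsSquare (-(a : ZMod q))) :
    ∃ r, r.Prime ∧ r % 4 = 3 ∧ r < q ∧ IsSquare (-(a : ZMod r)) := by
  obtain ⟨w, ⟨k, rfl⟩, hwq, hw⟩ :=
    ZMod.exists_even_sq_eq_of_isSquare (hq.odd_of_ne_two (by omega)) hsq
  obtain ⟨M, hM⟩ : q ∣ (k + k) ^ 2 + a := by
    rw [← ZMod.natCast_eq_zero_iff]
    push_cast at hw ⊢
    rw [hw, neg_add_cancel]
  have hMq : M < q := by
    by_contra! h
    nlinarith [Nat.mul_le_mul_left q h]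
  have hM4 : M % 4 = 3 := by
    have hmod : q % 4 * (M % 4) % 4 = 1 := by
      rw [← Nat.mul_mod, ← hM, show (k + k) ^ 2 + a = 4 * (k * k) + a by ring]
      omega
    rw [hq4] at hmod
    omega
  obtain ⟨r, hr, hrM, hr4⟩ := Nat.exists_prime_dvd_of_mod_four_eq_three hM4
  refine ⟨r, hr, hr4, (Nat.le_of_dvd (by omega) hrM).trans_lt hMq, (k + k : ℕ), ?_⟩
  have hr0 : (((k + k) ^ 2 + a : ℕ) : ZMod r) = 0 := by
    rw [ZMod.natCast_eq_zero_iff, hM]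
    exact dvd_mul_of_dvd_right hrM q
  push_cast at hr0 ⊢
  linear_combination -hr0

theorem exists_prime_lt_isSquare_neg {a q : ℕ} (ha : a % 4 = 1) (hq : q.Prime)
    (hq4 : q % 4 = 3) (hsq : IsSquare (-(a : ZMod q))) :
    ∃ r, r.Prime ∧ r % 4 = 3 ∧ r < a ∧ IsSquare (-(a : ZMod r)) := by
  induction q using Nat.strong_induction_on with
  | _ q ih =>
    rcases lt_or_gt_of_ne (show q ≠ a by omega) with hqa | haq
    · exact ⟨q, hq, hq4, hqa, hsq⟩
    · obtain ⟨r, hr, hr4, hrq, hrsq⟩ := exists_prime_lt_isSquare_neg_of_lt ha hq hq4 haq hsq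
      exact ih r hrq hr hr4 hrsq

theorem infinite_setOf_prime_mod_four_eq_three_legendreSym_eq_neg_one {a : ℕ} (ha : a.Prime)
    (ha4 : a % 4 = 1) :
    {β : ℕ | ∃ hβ : β.Prime, β % 4 = 3 ∧ @legendreSym β ⟨hβ⟩ (a : ℤ) = -1}.Infinite := by
  have : Fact a.Prime := ⟨ha⟩
  obtain ⟨b, hb⟩ := FiniteField.exists_nonsquare (F := ZMod a)
    (by rw [ZMod.ringChar_zmod_n]; omega)
  have hcop : Nat.Coprime 4 a := by
    rw [Nat.coprime_comm, ha.coprime_iff_not_dvd]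
    exact fun h => by have := Nat.le_of_dvd (by norm_num) h; have := ha.two_le; omega
  let e := ZMod.chineseRemainder hcop
  have hunit : IsUnit (e.symm (3, b)) := by
    have h3 : IsUnit (3 : ZMod 4) := IsUnit.of_mul_eq_one 3 (by decide)
    have hb0 : b ≠ 0 := by rintro rfl; exact hb ⟨0, by simp⟩
    exact (Prod.isUnit_iff.mpr ⟨h3, hb0.isUnit⟩).map e.symm
  have : NeZero (4 * a) := ⟨by have := ha.pos; omega⟩
  refine (Nat.infinite_setOfPred_prime_and_eq_mod hunit).mono ?_
  rintro p ⟨hp, hpe⟩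
  have : Fact p.Prime := ⟨hp⟩
  have hpe' : ((p : ZMod 4), (p : ZMod a)) = (3, b) := by
    rw [← e.apply_symm_apply (3, b), ← hpe, map_natCast]
    rfl
  simp only [Prod.mk.injEq] at hpe'
  have hp4 : p % 4 = 3 := by
    simpa using (ZMod.natCast_eq_natCast_iff' p 3 4).mp (by exact_mod_cast hpe'.1)
  refine ⟨hp, hp4, ?_⟩
  rw [legendreSym.quadratic_reciprocity_one_mod_four ha4 (by omega)]
  exact (legendreSym.eq_neg_one_iff' a).mpr (hpe'.2 ▸ hb)

/-- Teege's theorem: for a prime `a ≡ 1 (mod 8)` the set of primes `β ≡ 3 (mod 4)`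
with `(a/β) = -1` is infinite, and it contains a prime `β < a`. -/
theorem teege_theorem (a : ℕ) (ha : a.Prime) (ha8 : a % 8 = 1) :
    {β : ℕ | ∃ hβ : β.Prime, β % 4 = 3 ∧ @legendreSym β ⟨hβ⟩ (a : ℤ) = -1}.Infinite ∧
    ∃ β : ℕ, ∃ hβ : β.Prime, β % 4 = 3 ∧ @legendreSym β ⟨hβ⟩ (a : ℤ) = -1 ∧ β < a := by
  have ha4 : a % 4 = 1 := by omega
  have hinf := infinite_setOf_prime_mod_four_eq_three_legendreSym_eq_neg_one ha ha4
  refine ⟨hinf, ?_⟩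
  obtain ⟨q, hq, hq4, hqa⟩ := hinf.nonempty
  have : Fact q.Prime := ⟨hq⟩
  have hq0 : ((a : ℤ) : ZMod q) ≠ 0 := fun h => by
    rw [← legendreSym.eq_zero_iff] at h
    omega
  obtain ⟨r, hr, hr4, hra, hrsq⟩ := exists_prime_lt_isSquare_neg ha4 hq hq4
    (by simpa using (legendreSym_eq_neg_one_iff_isSquare_neg hq4 hq0).mp hqa)
  have : Fact r.Prime := ⟨hr⟩
  have hr0 : ((a : ℤ) : ZMod r) ≠ 0 := by
    rw [Int.cast_natCast, Ne, ZMod.natCast_eq_zero_iff]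
    exact fun h => by have := (Nat.prime_dvd_prime_iff_eq hr ha).mp h; omega
  exact ⟨r, hr, hr4, (legendreSym_eq_neg_one_iff_isSquare_neg hr4 hr0).mpr (by simpa using hrsq),
    hra⟩
end

section
/- Let S be a set of prime numbers and let s be a real number with s > 1. Let ω(m) denote the number of distinct prime factors of a positive integer m. Then the family m ↦ 2^{ω(m)} / m^s, indexed by the positive integers m all of whose prime factors lie in S, is summable, and its sum equals the (convergent) infinite product over all primes p in S of (1 + p^{-s}) / (1 - p^{-s}). -/
/-!
The weight `m ↦ 2^{ω(m)} m^{-s}`, cut down to the integers whose prime factors lie in `S`, is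
multiplicative; at `p^e` with `e ≥ 1` it equals `2 p^{-es}` if `p ∈ S` and `0` otherwise, so its
local factor is the geometric series `(1 + p^{-s}) / (1 - p^{-s})` on `S` and `1` off `S`, and
the Euler product formula applies. Absolute convergence follows from `2^{ω(m)} ≤ d(m)`, whose
Dirichlet series is `ζ(s)²`.
-/

open scoped LSeries.notation

theorem Nat.two_pow_card_primeFactors_le_card_divisors {n : ℕ} (hn : n ≠ 0) :
    2 ^ n.primeFactors.card ≤ n.divisors.card := by
  rw [Nat.card_divisors hn, ← Finset.prod_const]
  refine Finset.prod_le_prod' fun p hp => ?_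
  have := (Nat.prime_of_mem_primeFactors hp).factorization_pos_of_dvd hn
    (Nat.dvd_of_mem_primeFactors hp)
  omega

lemma one_convolution_one_apply (n : ℕ) : ((1 : ℕ → ℂ) ⍟ 1) n = n.divisors.card := by
  simp [LSeries.convolution_def, ← Nat.map_div_right_divisors]

lemma summable_two_pow_card_primeFactors_div_rpow {s : ℝ} (hs : 1 < s) :
    Summable fun n : ℕ => (2 : ℝ) ^ n.primeFactors.card / (n : ℝ) ^ s := by
  have hζ : LSeriesSummable 1 (s : ℂ) := LSeriesSummable_one_iff.mpr (by simpa using hs)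
  refine (hζ.convolution hζ).norm.of_nonneg_of_le (fun n => by positivity) fun n => ?_
  rw [LSeries.norm_term_eq, one_convolution_one_apply, Complex.ofReal_re]
  rcases eq_or_ne n 0 with rfl | hn
  · simp [Real.zero_rpow (by linarith : s ≠ 0)]
  rw [if_neg hn, Complex.norm_natCast]
  gcongr
  exact_mod_cast Nat.two_pow_card_primeFactors_le_card_divisors hn

lemma two_pow_card_primeFactors_div_rpow_mul {m n : ℕ} (hmn : m.Coprime n) (s : ℝ) :
    (2 : ℝ) ^ (m * n).primeFactors.card / ((m * n : ℕ) : ℝ) ^ s =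
      2 ^ m.primeFactors.card / (m : ℝ) ^ s * (2 ^ n.primeFactors.card / (n : ℝ) ^ s) := by
  rw [hmn.primeFactors_mul, Finset.card_union_of_disjoint hmn.disjoint_primeFactors, pow_add,
    Nat.cast_mul, Real.mul_rpow (Nat.cast_nonneg m) (Nat.cast_nonneg n), mul_div_mul_comm]

lemma two_pow_card_primeFactors_div_rpow_prime_pow {p : ℕ} (hp : p.Prime) {e : ℕ} (he : e ≠ 0)
    (s : ℝ) :
    (2 : ℝ) ^ (p ^ e).primeFactors.card / ((p ^ e : ℕ) : ℝ) ^ s = 2 * ((p : ℝ) ^ (-s)) ^ e := by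
  rw [Nat.primeFactors_prime_pow he hp, Finset.card_singleton, pow_one, Nat.cast_pow,
    ← Real.rpow_pow_comm (Nat.cast_nonneg p), Real.rpow_neg (Nat.cast_nonneg p), inv_pow,
    div_eq_mul_inv]

lemma hasSum_two_mul_pow_succ {𝕜 : Type*} [NormedField 𝕜] [CompleteSpace 𝕜] {x : 𝕜}
    (hx : ‖x‖ < 1) : HasSum (fun e : ℕ => 2 * x ^ (e + 1)) ((1 + x) / (1 - x) - 1) := by
  have hx1 : 1 - x ≠ 0 := sub_ne_zero.mpr (by rintro rfl; simp at hx)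
  rw [show (1 + x) / (1 - x) - 1 = 2 * x * (1 - x)⁻¹ by field_simp; ring]
  simpa only [pow_succ', mul_assoc] using (hasSum_geometric_of_norm_lt_one hx).mul_left (2 * x)

def factoredBy (S : Set ℕ) : Set ℕ := {m | 0 < m ∧ ∀ p : ℕ, p.Prime → p ∣ m → p ∈ S}

noncomputable def omegaWeight (S : Set ℕ) (s : ℝ) : ℕ → ℝ :=
  (factoredBy S).indicator fun m => 2 ^ m.primeFactors.card / (m : ℝ) ^ s

section

variable {S : Set ℕ} {s : ℝ}

lemma one_mem_factoredBy : 1 ∈ factoredBy S :=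
  ⟨one_pos, fun _ hp h => absurd (Nat.dvd_one.mp h) hp.ne_one⟩

lemma mul_mem_factoredBy_iff {m n : ℕ} :
    m * n ∈ factoredBy S ↔ m ∈ factoredBy S ∧ n ∈ factoredBy S := by
  simp only [factoredBy, Set.mem_ofPred_eq, CanonicallyOrderedAdd.mul_pos]
  constructor
  · rintro ⟨⟨hm, hn⟩, h⟩
    exact ⟨⟨hm, fun p hp hpm => h p hp (hpm.mul_right n)⟩,
      ⟨hn, fun p hp hpn => h p hp (hpn.mul_left m)⟩⟩
  · rintro ⟨⟨hm, hSm⟩, hn, hSn⟩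
    exact ⟨⟨hm, hn⟩, fun p hp hpmn => (hp.dvd_mul.mp hpmn).elim (hSm p hp) (hSn p hp)⟩

lemma prime_pow_mem_factoredBy_iff {p : ℕ} (hp : p.Prime) {e : ℕ} (he : e ≠ 0) :
    p ^ e ∈ factoredBy S ↔ p ∈ S := by
  refine ⟨fun h => h.2 p hp (dvd_pow_self p he),
    fun hpS => ⟨pow_pos hp.pos e, fun _ hq hqp => ?_⟩⟩
  rwa [(Nat.prime_dvd_prime_iff_eq hq hp).mp (hq.dvd_of_dvd_pow hqp)]

lemma omegaWeight_zero : omegaWeight S s 0 = 0 :=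
  Set.indicator_of_notMem (fun h => h.1.false) _

lemma omegaWeight_one : omegaWeight S s 1 = 1 := by
  simp [omegaWeight, Set.indicator_of_mem one_mem_factoredBy]

lemma omegaWeight_mul {m n : ℕ} (hmn : m.Coprime n) :
    omegaWeight S s (m * n) = omegaWeight S s m * omegaWeight S s n := by
  by_cases h : m ∈ factoredBy S ∧ n ∈ factoredBy S
  · simp only [omegaWeight, Set.indicator_of_mem h.1, Set.indicator_of_mem h.2,
      Set.indicator_of_mem (mul_mem_factoredBy_iff.mpr h),
      two_pow_card_primeFactors_div_rpow_mul hmn]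
  · rw [omegaWeight, Set.indicator_of_notMem (mt mul_mem_factoredBy_iff.mp h)]
    rcases not_and_or.mp h with h | h <;> simp [Set.indicator_of_notMem h]

lemma omegaWeight_prime_pow_of_mem {p : ℕ} (hp : p.Prime) (hpS : p ∈ S) {e : ℕ}
    (he : e ≠ 0) : omegaWeight S s (p ^ e) = 2 * ((p : ℝ) ^ (-s)) ^ e := by
  rw [omegaWeight, Set.indicator_of_mem ((prime_pow_mem_factoredBy_iff hp he).mpr hpS),
    two_pow_card_primeFactors_div_rpow_prime_pow hp he]

lemma omegaWeight_prime_pow_of_notMem {p : ℕ} (hp : p.Prime) (hpS : p ∉ S) {e : ℕ}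
    (he : e ≠ 0) : omegaWeight S s (p ^ e) = 0 :=
  Set.indicator_of_notMem (mt (prime_pow_mem_factoredBy_iff hp he).mp hpS) _

lemma hasSum_omegaWeight_prime_pow_of_mem {p : ℕ} (hp : p.Prime) (hpS : p ∈ S) (hs : 0 < s) :
    HasSum (fun e => omegaWeight S s (p ^ e)) ((1 + (p : ℝ) ^ (-s)) / (1 - (p : ℝ) ^ (-s))) := by
  have hx : ‖(p : ℝ) ^ (-s)‖ < 1 := by
    rw [Real.norm_of_nonneg (by positivity)]
    exact Real.rpow_lt_one_of_one_lt_of_neg (by exact_mod_cast hp.one_lt) (neg_lt_zero.mpr hs)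
  refine (hasSum_nat_add_iff' 1).mp ?_
  simpa [omegaWeight_one, omegaWeight_prime_pow_of_mem hp hpS] using hasSum_two_mul_pow_succ hx

lemma tsum_omegaWeight_prime_pow_of_notMem {p : ℕ} (hp : p.Prime) (hpS : p ∉ S) :
    ∑' e, omegaWeight S s (p ^ e) = 1 := by
  rw [tsum_eq_single 0 fun e he => omegaWeight_prime_pow_of_notMem hp hpS he, pow_zero,
    omegaWeight_one]

lemma mulIndicator_primes_tsum_omegaWeight (hS : ∀ p ∈ S, p.Prime) (hs : 0 < s) :
    {p | p.Prime}.mulIndicator (fun p => ∑' e, omegaWeight S s (p ^ e)) =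
      S.mulIndicator fun p => (1 + (p : ℝ) ^ (-s)) / (1 - (p : ℝ) ^ (-s)) := by
  ext p
  by_cases hpS : p ∈ S
  · rw [Set.mulIndicator_of_mem (show p ∈ {p : ℕ | p.Prime} from hS p hpS),
      Set.mulIndicator_of_mem hpS, (hasSum_omegaWeight_prime_pow_of_mem (hS p hpS) hpS hs).tsum_eq]
  · rw [Set.mulIndicator_of_notMem hpS]
    by_cases hp : p.Prime
    · rw [Set.mulIndicator_of_mem (show p ∈ {p : ℕ | p.Prime} from hp),
        tsum_omegaWeight_prime_pow_of_notMem hp hpS]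
    · exact Set.mulIndicator_of_notMem hp _

lemma summable_norm_omegaWeight (hs : 1 < s) : Summable fun n => ‖omegaWeight S s n‖ :=
  summable_norm_iff.mpr ((summable_two_pow_card_primeFactors_div_rpow hs).indicator _)

end

/-- Dirichlet's Euler-product identity: for a set `S` of primes and real `s > 1`,
the family `m ↦ 2^{ω(m)} / m^s` over positive integers `m` whose prime factors all
lie in `S` is summable, the product over `p ∈ S` of `(1 + p⁻ˢ)/(1 − p⁻ˢ)` converges,
and the sum equals the product. -/
theorem dirichlet_euler_product (S : Set ℕ) (hS : ∀ p ∈ S, p.Prime)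
    (s : ℝ) (hs : 1 < s) :
    Summable (fun m : {m : ℕ // 0 < m ∧ ∀ p : ℕ, p.Prime → p ∣ m → p ∈ S} =>
      (2 : ℝ) ^ (m.1.primeFactors.card) / (m.1 : ℝ) ^ s) ∧
    Multipliable (fun p : S => (1 + (p.1 : ℝ) ^ (-s)) / (1 - (p.1 : ℝ) ^ (-s))) ∧
    (∑' m : {m : ℕ // 0 < m ∧ ∀ p : ℕ, p.Prime → p ∣ m → p ∈ S},
        (2 : ℝ) ^ (m.1.primeFactors.card) / (m.1 : ℝ) ^ s) =
      ∏' p : S, (1 + (p.1 : ℝ) ^ (-s)) / (1 - (p.1 : ℝ) ^ (-s)) := by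
  have hsum : Summable fun n => ‖omegaWeight S s n‖ := summable_norm_omegaWeight hs
  have hprod : HasProd (fun p : S => (1 + (p.1 : ℝ) ^ (-s)) / (1 - (p.1 : ℝ) ^ (-s)))
      (∑' n, omegaWeight S s n) := by
    refine (hasProd_subtype_iff_mulIndicator
      (f := fun p : ℕ => (1 + (p : ℝ) ^ (-s)) / (1 - (p : ℝ) ^ (-s)))).mpr ?_
    rw [← mulIndicator_primes_tsum_omegaWeight hS (zero_lt_one.trans hs)]
    exact EulerProduct.eulerProduct_hasProd_mulIndicator omegaWeight_one omegaWeight_mul hsum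
      omegaWeight_zero
  refine ⟨summable_subtype_iff_indicator.mpr hsum.of_norm, hprod.multipliable, ?_⟩
  rw [hprod.tprod_eq]
  exact tsum_subtype (factoredBy S) fun m => (2 : ℝ) ^ m.primeFactors.card / (m : ℝ) ^ s
end

section
/- Let p be a prime with p ≡ 1 (mod 8). Then there exists a prime q with q < p, q ≡ 3 (mod 4), and Legendre symbol (p/q) = -1. -/
/-- Every natural number `≡ 3 (mod 4)` has a prime factor `≡ 3 (mod 4)`. -/
lemma exists_prime_three_mod_four_dvd :
    ∀ n : ℕ, n % 4 = 3 → ∃ q : ℕ, q.Prime ∧ q % 4 = 3 ∧ q ∣ n := by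
  intro n
  induction n using Nat.strong_induction_on with
  | _ n ih =>
    intro hn
    have hn1 : n ≠ 1 := by omega
    have hd : n.minFac.Prime := Nat.minFac_prime hn1
    have hdvd : n.minFac ∣ n := Nat.minFac_dvd n
    have hodd : n % 2 = 1 := by omega
    have hd2 : n.minFac ≠ 2 := by
      intro h
      have h2 : 2 ∣ n := h ▸ hdvd
      omega
    have hdo : n.minFac % 2 = 1 := (hd.eq_two_or_odd).resolve_left hd2
    rcases (by omega : n.minFac % 4 = 1 ∨ n.minFac % 4 = 3) with h4 | h4
    · -- cofactor is ≡ 3 mod 4, recurse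
      set e := n / n.minFac with he
      have hne : n = n.minFac * e := (Nat.mul_div_cancel' hdvd).symm
      have hd1 : 1 < n.minFac := hd.one_lt
      have hnpos : 0 < n := by omega
      have helt : e < n := by
        rw [he]
        exact Nat.div_lt_self hnpos hd1
      have he4 : e % 4 = 3 := by
        have hmm : n % 4 = (n.minFac % 4) * (e % 4) % 4 := by
          conv_lhs => rw [hne]
          rw [Nat.mul_mod]
        rw [h4, hn] at hmm
        omega
      obtain ⟨q, hq, hq4, hqe⟩ := ih e helt he4
      exact ⟨q, hq, hq4, hqe.trans (Nat.div_dvd_of_dvd hdvd)⟩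
    · exact ⟨n.minFac, hd, h4, hdvd⟩

/-- Descent: from any prime `Q ≡ 3 (mod 4)` with `(p/Q) = -1`, produce such a prime
below `p`. -/
lemma teege_descent (p : ℕ) (hp : p.Prime) (hp8 : p % 8 = 1) :
    ∀ Q : ℕ, ∀ hQ : Q.Prime, Q % 4 = 3 → @legendreSym Q ⟨hQ⟩ (p : ℤ) = -1 →
      ∃ q : ℕ, ∃ hq : q.Prime, q < p ∧ q % 4 = 3 ∧
        @legendreSym q ⟨hq⟩ (p : ℤ) = -1 := by
  intro Q
  induction Q using Nat.strong_induction_on with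
  | _ Q ih =>
    intro hQ hQ4 hQLraw
    by_cases hlt : Q < p
    · exact ⟨Q, hQ, hlt, hQ4, hQLraw⟩
    haveI fQ : Fact Q.Prime := ⟨hQ⟩
    haveI fp : Fact p.Prime := ⟨hp⟩
    haveI : NeZero Q := ⟨hQ.ne_zero⟩
    have hQL : legendreSym Q ((p : ℕ) : ℤ) = -1 := hQLraw
    have hp4 : p % 4 = 1 := by omega
    have hne : Q ≠ p := by
      intro h
      rw [h] at hQ4
      omega
    have hQ2 : Q ≠ 2 := by omega
    have hQ3 : 3 ≤ Q := by
      have := hQ.two_le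
      omega
    have hpQ : p < Q := by omega
    have hQdvdp : ¬ Q ∣ p := by
      intro h
      exact hne ((Nat.prime_dvd_prime_iff_eq hQ hp).mp h)
    have hpZ : ((p : ℕ) : ZMod Q) ≠ 0 := by
      rw [Ne, ZMod.natCast_eq_zero_iff]
      exact hQdvdp
    -- -p is a square mod Q
    have hcast2 : ((-(p : ℤ) : ℤ) : ZMod Q) = -((p : ℕ) : ZMod Q) := by push_cast; ring
    have hnz : ((-(p : ℤ) : ℤ) : ZMod Q) ≠ 0 := by
      rw [hcast2]
      exact neg_ne_zero.mpr hpZ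
    have hχ : legendreSym Q (-1) = -1 := by
      rw [legendreSym.at_neg_one hQ2, ZMod.χ₄_nat_three_mod_four hQ4]
    have hmul : legendreSym Q (-(p : ℤ)) = 1 := by
      have h1 : (-(p : ℤ)) = (-1) * (p : ℤ) := by ring
      rw [h1, legendreSym.mul, hχ, hQL]
      ring
    have hsq : IsSquare ((-(p : ℤ) : ℤ) : ZMod Q) :=
      (legendreSym.eq_one_iff Q hnz).mp hmul
    obtain ⟨y, hy⟩ := hsq
    have hy' : y * y = -((p : ℕ) : ZMod Q) := by rw [← hy, hcast2]
    -- choose representative x with 2x ≤ Q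
    set x₀ := y.val with hx₀def
    have hx₀lt : x₀ < Q := ZMod.val_lt y
    have hx₀cast : ((x₀ : ℕ) : ZMod Q) = y := by
      rw [hx₀def, ZMod.natCast_val, ZMod.cast_id]
    set x := if 2 * x₀ ≤ Q then x₀ else Q - x₀ with hxdef
    have h2x : 2 * x ≤ Q := by
      rw [hxdef]
      split <;> omega
    have hxy : ((x : ℕ) : ZMod Q) = y ∨ ((x : ℕ) : ZMod Q) = -y := by
      rw [hxdef]
      split
      · left; exact hx₀cast
      · right
        rw [Nat.cast_sub hx₀lt.le, ZMod.natCast_self, hx₀cast]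
        ring
    have hxQ : ((x * x + p : ℕ) : ZMod Q) = 0 := by
      push_cast
      rcases hxy with h | h <;> rw [h]
      · rw [hy']; ring
      · have : (-y) * (-y) = y * y := by ring
        rw [this, hy']; ring
    have hQN : Q ∣ x * x + p := (ZMod.natCast_eq_zero_iff _ _).mp hxQ
    -- size bound
    have hbound : x * x + p < Q * Q := by
      have h1 : (2 * x) * (2 * x) ≤ Q * Q := Nat.mul_le_mul h2x h2x
      have h4 : (2 * x) * (2 * x) = 4 * (x * x) := by ring
      rw [h4] at h1
      have h3 : 3 * Q ≤ Q * Q := Nat.mul_le_mul hQ3 (le_refl Q)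
      set A := x * x with hA
      set B := Q * Q with hB
      omega
    -- find M ≡ 3 (mod 4) dividing x*x+p with M < Q
    have hM : ∃ M : ℕ, M % 4 = 3 ∧ M ∣ (x * x + p) ∧ M < Q := by
      rcases (by omega : x % 2 = 0 ∨ x % 2 = 1) with hx2 | hx2
      · -- x even : x*x+p ≡ 1 (mod 4)
        obtain ⟨k, hk⟩ : ∃ k, x = 2 * k := ⟨x / 2, by omega⟩
        have hxx : x * x = 4 * (k * k) := by rw [hk]; ring
        have hN4 : (x * x + p) % 4 = 1 := by
          have hKK : 0 ≤ k * k := Nat.zero_le _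
          set K := k * k with hK
          omega
        set m := (x * x + p) / Q with hmdef
        have hNm : x * x + p = Q * m := (Nat.mul_div_cancel' hQN).symm
        have hmlt : m < Q := by
          have hlt2 : Q * m < Q * Q := hNm ▸ hbound
          exact Nat.lt_of_mul_lt_mul_left hlt2
        have hm4 : m % 4 = 3 := by
          have hmm : (Q * m) % 4 = (Q % 4) * (m % 4) % 4 := Nat.mul_mod Q m 4
          rw [← hNm, hN4, hQ4] at hmm
          omega
        exact ⟨m, hm4, ⟨Q, by rw [hNm]; ring⟩, hmlt⟩
      · -- x odd : x*x+p ≡ 2 (mod 8)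
        obtain ⟨k, hk⟩ : ∃ k, x = 2 * k + 1 := ⟨x / 2, by omega⟩
        have hxx : x * x = 4 * (k * (k + 1)) + 1 := by rw [hk]; ring
        have hkk : k * (k + 1) % 2 = 0 := Nat.even_iff.mp (Nat.even_mul_succ_self k)
        have hN8 : (x * x + p) % 8 = 2 := by
          set K := k * (k + 1) with hK
          set A := x * x with hA
          omega
        set N' := (x * x + p) / 2 with hN'def
        have hNN' : x * x + p = 2 * N' := by
          set A := x * x with hA
          omega
        have hN'4 : N' % 4 = 1 := by
          set A := x * x with hA
          omega
        have hcop2 : Nat.Coprime Q 2 := by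
          have h2Q : ¬ (2 ∣ Q) := by omega
          exact ((Nat.prime_two.coprime_iff_not_dvd).mpr h2Q).symm
        have hQN' : Q ∣ N' := hcop2.dvd_of_dvd_mul_left (hNN' ▸ hQN)
        set m := N' / Q with hmdef
        have hNm : N' = Q * m := (Nat.mul_div_cancel' hQN').symm
        have hmlt : m < Q := by
          have hle : N' ≤ x * x + p := by
            set A := x * x with hA
            omega
          have hlt2 : Q * m < Q * Q := lt_of_le_of_lt (hNm ▸ hle) hbound
          exact Nat.lt_of_mul_lt_mul_left hlt2
        have hm4 : m % 4 = 3 := by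
          have hmm : (Q * m) % 4 = (Q % 4) * (m % 4) % 4 := Nat.mul_mod Q m 4
          rw [← hNm, hN'4, hQ4] at hmm
          omega
        refine ⟨m, hm4, ?_, hmlt⟩
        have hm1 : m ∣ N' := ⟨Q, by rw [hNm]; ring⟩
        exact hm1.trans ⟨2, by rw [hNN']; ring⟩
    obtain ⟨M, hM4, hMdvd, hMlt⟩ := hM
    obtain ⟨q, hq, hq4, hqM⟩ := exists_prime_three_mod_four_dvd M hM4
    have hqN : q ∣ x * x + p := hqM.trans hMdvd
    have hMpos : 0 < M := by omega
    have hqlt : q < Q := lt_of_le_of_lt (Nat.le_of_dvd hMpos hqM) hMlt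
    haveI fq : Fact q.Prime := ⟨hq⟩
    haveI : NeZero q := ⟨hq.ne_zero⟩
    have hqp : q ≠ p := by
      intro h
      rw [h] at hq4
      omega
    have hq2 : q ≠ 2 := by omega
    have hqdvdp : ¬ q ∣ p := by
      intro h
      exact hqp ((Nat.prime_dvd_prime_iff_eq hq hp).mp h)
    have hpq0 : ((p : ℕ) : ZMod q) ≠ 0 := by
      rw [Ne, ZMod.natCast_eq_zero_iff]
      exact hqdvdp
    have hcastN : ((x * x + p : ℕ) : ZMod q) = 0 :=
      (ZMod.natCast_eq_zero_iff _ _).mpr hqN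
    have hrel : ((x : ℕ) : ZMod q) * ((x : ℕ) : ZMod q) = -((p : ℕ) : ZMod q) := by
      push_cast at hcastN
      linear_combination hcastN
    have hcast3 : ((-(p : ℤ) : ℤ) : ZMod q) = -((p : ℕ) : ZMod q) := by push_cast; ring
    have hnz3 : ((-(p : ℤ) : ℤ) : ZMod q) ≠ 0 := by
      rw [hcast3]
      exact neg_ne_zero.mpr hpq0
    have hsq3 : IsSquare ((-(p : ℤ) : ℤ) : ZMod q) := by
      rw [hcast3]
      exact ⟨((x : ℕ) : ZMod q), hrel.symm⟩
    have hLq1 : legendreSym q (-(p : ℤ)) = 1 := (legendreSym.eq_one_iff q hnz3).mpr hsq3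
    have hχq : legendreSym q (-1) = -1 := by
      rw [legendreSym.at_neg_one hq2, ZMod.χ₄_nat_three_mod_four hq4]
    have hLq : legendreSym q ((p : ℕ) : ℤ) = -1 := by
      have h1 : ((p : ℕ) : ℤ) = (-1) * (-(p : ℤ)) := by ring
      rw [h1, legendreSym.mul, hχq, hLq1]
      ring
    exact ih q hqlt hq hq4 hLq

/-- Teege's refinement: for a prime `p ≡ 1 (mod 8)` there exists a prime `q < p`
with `q ≡ 3 (mod 4)` and `(p/q) = -1`. -/
theorem teege_refinement (p : ℕ) (hp : p.Prime) (hp8 : p % 8 = 1) :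
    ∃ q : ℕ, ∃ hq : q.Prime, q < p ∧ q % 4 = 3 ∧
      @legendreSym q ⟨hq⟩ (p : ℤ) = -1 := by
  haveI fp : Fact p.Prime := ⟨hp⟩
  haveI : NeZero p := ⟨hp.ne_zero⟩
  have hp4 : p % 4 = 1 := by omega
  have hp2 : p ≠ 2 := by omega
  -- a nonsquare modulo p
  have hchar : ringChar (ZMod p) ≠ 2 := by
    rw [ZMod.ringChar_zmod_n]
    exact hp2
  obtain ⟨u, hu⟩ := FiniteField.exists_nonsquare (F := ZMod p) hchar
  have hu0 : u ≠ 0 := by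
    intro h
    exact hu (h ▸ ⟨0, by ring⟩)
  set b := u.val with hbdef
  have hbu : ((b : ℕ) : ZMod p) = u := by
    rw [hbdef, ZMod.natCast_val, ZMod.cast_id]
  have hbp : b < p := ZMod.val_lt u
  have hb0 : b ≠ 0 := by
    intro h
    apply hu0
    rw [← hbu, h, Nat.cast_zero]
  -- CRT: find a ≡ 3 (mod 4), a ≡ b (mod p)
  have key : ∃ t : ℕ, (b + p * t) % 4 = 3 := by
    rcases (by omega : b % 4 = 0 ∨ b % 4 = 1 ∨ b % 4 = 2 ∨ b % 4 = 3) with h | h | h | h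
    · exact ⟨3, by omega⟩
    · exact ⟨2, by omega⟩
    · exact ⟨1, by omega⟩
    · exact ⟨0, by omega⟩
  obtain ⟨t, ha4⟩ := key
  set a := b + p * t with hadef
  have hamodp : a % p = b % p := Nat.add_mul_mod_self_left b p t
  have hap : ¬ p ∣ a := by
    intro h
    rw [hadef, add_comm] at h
    have hpb : p ∣ b := (Nat.dvd_add_right (dvd_mul_right p t)).mp h
    have := Nat.le_of_dvd (by omega) hpb
    omega
  have hcop : Nat.Coprime a (4 * p) := by
    refine Nat.Coprime.mul_right ?_ ?_
    · have ha2 : ¬ (2 ∣ a) := by omega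
      have h2 : Nat.Coprime a 2 := ((Nat.prime_two.coprime_iff_not_dvd).mpr ha2).symm
      have h4 : (4 : ℕ) = 2 ^ 2 := by norm_num
      rw [h4]
      exact h2.pow_right 2
    · exact (Nat.coprime_comm.mp ((hp.coprime_iff_not_dvd).mpr hap))
  haveI : NeZero (4 * p) := ⟨by have := hp.pos; omega⟩
  have haunit : IsUnit ((a : ℕ) : ZMod (4 * p)) := (ZMod.isUnit_iff_coprime a (4 * p)).mpr hcop
  obtain ⟨Q, hQgt, hQprime, hQeq⟩ := Nat.forall_exists_prime_gt_and_eq_mod haunit 0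
  have hmodeq : Q ≡ a [MOD 4 * p] := (ZMod.natCast_eq_natCast_iff _ _ _).mp hQeq
  have hQ4 : Q % 4 = 3 := by
    have h := Nat.ModEq.of_mul_right p hmodeq
    have h' : Q % 4 = a % 4 := h
    omega
  have hQmodp : Q ≡ b [MOD p] := by
    have h := Nat.ModEq.of_mul_left 4 hmodeq
    have h' : Q % p = a % p := h
    have : Q % p = b % p := by rw [h', hamodp]
    exact this
  haveI fQ : Fact Q.Prime := ⟨hQprime⟩
  have hQu : ((Q : ℕ) : ZMod p) = u := by
    rw [(ZMod.natCast_eq_natCast_iff _ _ _).mpr hQmodp, hbu]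
  have hQL : legendreSym p ((Q : ℕ) : ℤ) = -1 := by
    rw [legendreSym.eq_neg_one_iff]
    intro hsq
    apply hu
    have hc : (((Q : ℕ) : ℤ) : ZMod p) = u := by
      push_cast
      exact hQu
    rwa [hc] at hsq
  have hQ2 : Q ≠ 2 := by omega
  have hQLp : legendreSym Q ((p : ℕ) : ℤ) = -1 := by
    rw [legendreSym.quadratic_reciprocity_one_mod_four hp4 hQ2]
    exact hQL
  exact teege_descent p hp hp8 Q hQprime hQ4 hQLp
end

section
/- Let D be an integer that is not the square of any integer. Then the set of primes p with p ≡ 3 (mod 4), p ∤ D, and Legendre symbol (D/p) = -1 is infinite. In particular, for every prime a with a ≡ 1 (mod 4), there exist infinitely many primes b with b ≡ 3 (mod 4) and Legendre symbol (a/b) = -1. -/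
/-!
For a nonsquare `D` the character `m ↦ J(D | m)` on odd `m` is nontrivial. Either `|D|` is a
square, so `D = -s²` and `m = 4s - 1 ≡ 3 (mod 4)` gives `-1`; or some prime `q` divides `D` to an
odd power `e`, `D = qᵉ r`, and any `m ≡ 1 (mod 4|r|)` has `J(r | m) = 1`, while such an `m` can
be chosen with `J(q | m) = -1` (`m ≡ 5 (mod 8)` if `q = 2`, a nonresidue mod `q` via reciprocity
otherwise). As `n₀ = 4|D| - 1 ≡ 3 (mod 4)` is coprime to `D`, one of `n₀`, `m`, `m n₀` is
`≡ 3 (mod 4)` with symbol `-1`. Since `J(D | ·)` only depends on the class modulo `4|D|`,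
Dirichlet's theorem supplies infinitely many primes in that class.
-/

open NumberTheorySymbols

theorem Nat.exists_prime_odd_factorization_of_not_isSquare {n : ℕ} (hn : ¬IsSquare n) :
    ∃ p, p.Prime ∧ Odd (n.factorization p) := by
  obtain ⟨a, b, rfl, ha⟩ := Nat.sq_mul_squarefree n
  have ha1 : a ≠ 1 := by rintro rfl; exact hn ⟨b, by ring⟩
  have hb0 : b ≠ 0 := by rintro rfl; exact hn ⟨0, by simp⟩
  obtain ⟨p, hp, hpa⟩ := Nat.exists_prime_and_dvd ha1
  have hpa1 : a.factorization p = 1 := le_antisymm (ha.natFactorization_le_one p)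
    ((hp.dvd_iff_one_le_factorization ha.ne_zero).mp hpa)
  refine ⟨p, hp, ?_⟩
  rw [Nat.factorization_mul (pow_ne_zero 2 hb0) ha.ne_zero, Finsupp.add_apply,
    Nat.factorization_pow, hpa1]
  exact ⟨b.factorization p, by simp [two_mul]⟩

theorem Int.exists_eq_pow_factorization_mul_and_not_dvd {D : ℤ} (hD : D ≠ 0) {p : ℕ}
    (hp : p.Prime) : ∃ r : ℤ, D = (p : ℤ) ^ D.natAbs.factorization p * r ∧ ¬(p : ℤ) ∣ r := by
  refine ⟨D.sign * (ordCompl[p] D.natAbs : ℕ), ?_, ?_⟩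
  · conv_lhs => rw [← Int.sign_mul_natAbs D, ← Nat.ordProj_mul_ordCompl_eq_self D.natAbs p]
    push_cast
    ring
  · rw [Int.natCast_dvd, Int.natAbs_mul, Int.natAbs_sign_of_ne_zero hD, one_mul,
      Int.natAbs_natCast]
    exact Nat.not_dvd_ordCompl hp (Int.natAbs_ne_zero.mpr hD)

theorem Nat.coprime_four_mul_sub_one {n : ℕ} (hn : n ≠ 0) : n.Coprime (4 * n - 1) := by
  have hsucc : 4 * n - 1 + 1 = 4 * n := by omega
  have : (4 * n - 1 + 1).Coprime (4 * n - 1) :=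
    Nat.coprime_self_add_left.mpr (Nat.coprime_one_left _)
  exact (hsucc ▸ this).coprime_dvd_left (dvd_mul_left n 4)

namespace jacobiSym

theorem eq_of_modEq_four_mul_natAbs {a : ℤ} {b c : ℕ} (hb : Odd b)
    (h : b ≡ c [MOD 4 * a.natAbs]) : J(a | b) = J(a | c) := by
  have hc : Odd c := by
    have h2 : b % 2 = c % 2 := h.of_dvd (dvd_mul_of_dvd_left (by norm_num) _)
    rwa [Nat.odd_iff, ← h2, ← Nat.odd_iff]
  rw [mod_right a hb, mod_right a hc, h]

theorem exists_odd_two_pow_mul_eq_neg_one {e : ℕ} (he : Odd e) {r : ℤ} (hr : Odd r) :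
    ∃ m, Odd m ∧ J(2 ^ e * r | m) = -1 := by
  set m := 4 * r.natAbs + 1
  have hm : Odd m := Nat.odd_iff.mpr (by omega)
  have hm8 : m % 8 = 5 := by obtain ⟨k, hk⟩ := Int.natAbs_odd.mpr hr; omega
  have hJr : J(r | m) = 1 := by
    rw [← eq_of_modEq_four_mul_natAbs odd_one (by simp [m, Nat.ModEq]), one_right]
  refine ⟨m, hm, ?_⟩
  rw [mul_left, pow_left, at_two hm, ZMod.χ₈_nat_eq_if_mod_eight, if_neg (by omega),
    if_neg (by omega), hJr, mul_one, he.neg_one_pow]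

theorem exists_odd_prime_pow_mul_eq_neg_one {q : ℕ} [Fact q.Prime] (hq : q ≠ 2) {e : ℕ}
    (he : Odd e) {r : ℤ} (hqr : ¬(q : ℤ) ∣ r) : ∃ m, Odd m ∧ J(q ^ e * r | m) = -1 := by
  have hqp : q.Prime := Fact.out
  obtain ⟨x, hx⟩ := FiniteField.exists_nonsquare (F := ZMod q) (by rwa [ZMod.ringChar_zmod_n])
  have hcop : q.Coprime (4 * r.natAbs) := Nat.Coprime.mul_right
    (by simpa using ((Nat.coprime_primes hqp Nat.prime_two).mpr hq).pow_right 2)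
    ((hqp.coprime_iff_not_dvd).mpr (by rwa [← Int.natCast_dvd]))
  obtain ⟨m, hmq, hmr⟩ := Nat.chineseRemainder hcop x.val 1
  have hm4 : m % 4 = 1 := hmr.of_dvd (dvd_mul_right 4 _)
  have hm : Odd m := Nat.odd_iff.mpr (by omega)
  have hJq : J(q | m) = -1 := by
    rw [quadratic_reciprocity_one_mod_four' (hqp.odd_of_ne_two hq) hm4,
      ← legendreSym.to_jacobiSym, legendreSym.eq_neg_one_iff',
      (ZMod.natCast_eq_natCast_iff _ _ _).mpr hmq, ZMod.natCast_zmod_val]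
    exact hx
  have hJr : J(r | m) = 1 := by
    rw [← eq_of_modEq_four_mul_natAbs odd_one hmr.symm, one_right]
  refine ⟨m, hm, ?_⟩
  rw [mul_left, pow_left, hJq, hJr, he.neg_one_pow, mul_one]

theorem exists_odd_neg_sq_eq_neg_one {s : ℕ} (hs : s ≠ 0) :
    ∃ m, Odd m ∧ J(-(s : ℤ) ^ 2 | m) = -1 := by
  have hm4 : (4 * s - 1) % 4 = 3 := by omega
  have hm : Odd (4 * s - 1) := Nat.odd_iff.mpr (by omega)
  refine ⟨4 * s - 1, hm, ?_⟩
  rw [jacobiSym.neg _ hm, ZMod.χ₄_nat_three_mod_four hm4,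
    sq_one' (by rw [Int.gcd_natCast_natCast]; exact Nat.coprime_four_mul_sub_one hs)]
  norm_num

theorem exists_odd_eq_neg_one {D : ℤ} (hD : ¬IsSquare D) : ∃ m, Odd m ∧ J(D | m) = -1 := by
  have hD0 : D ≠ 0 := by rintro rfl; exact hD IsSquare.zero
  by_cases habs : IsSquare D.natAbs
  · obtain ⟨s, hs⟩ := habs
    have hs0 : s ≠ 0 := by rintro rfl; exact hD0 (by simpa using hs)
    have hDs : D = -(s : ℤ) ^ 2 := by
      rcases Int.natAbs_eq D with h | h
      · exact absurd ⟨s, by rw [h, hs]; push_cast; ring⟩ hD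
      · rw [h, hs]; push_cast; ring
    exact hDs ▸ exists_odd_neg_sq_eq_neg_one hs0
  · obtain ⟨p, hp, he⟩ := Nat.exists_prime_odd_factorization_of_not_isSquare habs
    obtain ⟨r, hDr, hpr⟩ := Int.exists_eq_pow_factorization_mul_and_not_dvd hD0 hp
    have := Fact.mk hp
    rw [hDr]
    rcases eq_or_ne p 2 with rfl | hp2
    · exact exists_odd_two_pow_mul_eq_neg_one he
        (Int.not_even_iff_odd.mp (by rwa [even_iff_two_dvd]))
    · exact exists_odd_prime_pow_mul_eq_neg_one hp2 he hpr

theorem exists_mod_four_eq_three_eq_neg_one {D : ℤ} (hD : ¬IsSquare D) :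
    ∃ n, n % 4 = 3 ∧ J(D | n) = -1 := by
  obtain ⟨m, hm, hJm⟩ := exists_odd_eq_neg_one hD
  have hD0 : D.natAbs ≠ 0 := Int.natAbs_ne_zero.mpr (by rintro rfl; exact hD IsSquare.zero)
  have hn₀ : (4 * D.natAbs - 1) % 4 = 3 := by omega
  have hgcd : D.gcd (4 * D.natAbs - 1 : ℕ) = 1 := by
    rw [Int.gcd, Int.natAbs_natCast]; exact Nat.coprime_four_mul_sub_one hD0
  rcases eq_one_or_neg_one hgcd with h | h
  · rcases Nat.odd_mod_four_iff.mp (Nat.odd_iff.mp hm) with hm4 | hm4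
    · refine ⟨m * (4 * D.natAbs - 1), by rw [Nat.mul_mod, hm4, hn₀], ?_⟩
      rw [mul_right' D hm.pos.ne' (by omega), hJm, h, mul_one]
    · exact ⟨m, hm4, hJm⟩
  · exact ⟨_, hn₀, h⟩

end jacobiSym

theorem infinite_setOf_prime_mod_four_eq_three_jacobiSym_eq_neg_one {D : ℤ}
    (hD : ¬IsSquare D) : {p : ℕ | p.Prime ∧ p % 4 = 3 ∧ J(D | p) = -1}.Infinite := by
  obtain ⟨n, hn4, hJn⟩ := jacobiSym.exists_mod_four_eq_three_eq_neg_one hD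
  have hn : Odd n := Nat.odd_iff.mpr (by omega)
  have hcop : D.natAbs.Coprime n := by
    by_contra h
    simpa [hJn] using jacobiSym.eq_zero_iff.mpr ⟨hn.pos.ne', h⟩
  have hD0 : D.natAbs ≠ 0 := Int.natAbs_ne_zero.mpr (by rintro rfl; exact hD IsSquare.zero)
  have : NeZero (4 * D.natAbs) := ⟨by omega⟩
  have hunit : IsUnit (n : ZMod (4 * D.natAbs)) := by
    rw [ZMod.isUnit_iff_coprime]
    exact Nat.Coprime.mul_right
      (by simpa using (Nat.coprime_two_right.mpr hn).pow_right 2) hcop.symm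
  refine (Nat.infinite_setOfPred_prime_and_eq_mod hunit).mono ?_
  rintro p ⟨hp, hpn⟩
  have hpn : p ≡ n [MOD 4 * D.natAbs] := (ZMod.natCast_eq_natCast_iff _ _ _).mp hpn
  have hp4 : p % 4 = 3 := Eq.trans (hpn.of_dvd (dvd_mul_right 4 _)) hn4
  have hp2 : Odd p := hp.odd_of_ne_two (by omega)
  exact ⟨hp, hp4, (jacobiSym.eq_of_modEq_four_mul_natAbs hp2 hpn).trans hJn⟩

theorem infinite_setOf_prime_mod_four_eq_three_legendreSym_eq_neg_one_s19 {D : ℤ}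
    (hD : ¬IsSquare D) : {p : ℕ | ∃ hp : p.Prime, p % 4 = 3 ∧ ¬((p : ℤ) ∣ D) ∧
      @legendreSym p ⟨hp⟩ D = -1}.Infinite := by
  refine (infinite_setOf_prime_mod_four_eq_three_jacobiSym_eq_neg_one hD).mono ?_
  rintro p ⟨hp, hp4, hJ⟩
  have := Fact.mk hp
  rw [← jacobiSym.legendreSym.to_jacobiSym] at hJ
  refine ⟨hp, hp4, fun hpD ↦ ?_, hJ⟩
  have h0 := (legendreSym.eq_zero_iff p D).mpr
    ((ZMod.intCast_zmod_eq_zero_iff_dvd D p).mpr hpD)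
  rw [hJ] at h0
  norm_num at h0

/-- Strong form of Legendre's Lemma (Rogers): for a nonsquare integer `D`, the set
of primes `p ≡ 3 (mod 4)` with `p ∤ D` and `(D/p) = -1` is infinite. In particular,
for every prime `a ≡ 1 (mod 4)` there are infinitely many primes `b ≡ 3 (mod 4)`
with `(a/b) = -1`. -/
theorem rogers_legendre_lemma (D : ℤ) (hD : ¬ ∃ k : ℤ, k ^ 2 = D) :
    {p : ℕ | ∃ hp : p.Prime, p % 4 = 3 ∧ ¬((p : ℤ) ∣ D) ∧
      @legendreSym p ⟨hp⟩ D = -1}.Infinite ∧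
    ∀ a : ℕ, a.Prime → a % 4 = 1 →
      {b : ℕ | ∃ hb : b.Prime, b % 4 = 3 ∧
        @legendreSym b ⟨hb⟩ (a : ℤ) = -1}.Infinite := by
  refine ⟨infinite_setOf_prime_mod_four_eq_three_legendreSym_eq_neg_one_s19
    fun ⟨k, hk⟩ ↦ hD ⟨k, by rw [hk, sq]⟩, fun a ha _ ↦ ?_⟩
  refine (infinite_setOf_prime_mod_four_eq_three_legendreSym_eq_neg_one_s19
    (Nat.prime_iff_prime_int.mp ha).not_isSquare).mono ?_
  rintro p ⟨hp, hp4, -, hL⟩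
  exact ⟨hp, hp4, hL⟩
end
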